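/- Let V ⊂ H be complex Hilbert spaces with V continuously embedded in H, and let a₀(t,·,·), a₁(t,·,·) (t ∈ [0,T]) be families of continuous sesquilinear forms on V such that t ↦ a₀(t,u,v) is continuously differentiable (with derivative denoted a₀'(t,u,v)), a₀ is Hermitian, and t ↦ a₁(t,u,v) is continuous. Suppose u ∈ C²([0,T],V) and f ∈ C([0,T],H) satisfy ⟨u''(t),v⟩_H + a₀(t,u(t),v) + a₁(t,u(t),v) = ⟨f(t),v⟩_H for all v ∈ V and all t ∈ [0,T]. Then for all t ∈ [0,T]: ‖u'(t)‖_H² + a₀(t,u(t),u(t)) = ‖u'(0)‖_H² + a₀(0,u(0),u(0)) − 2∫₀ᵗ Re a₁(τ,u(τ),u'(τ)) dτ + ∫₀ᵗ a₀'(τ,u(τ),u(τ)) dτ + 2∫₀ᵗ Re⟨f(τ),u'(τ)⟩_H dτ. -/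

import Mathlib

/-!
Testing the equation with `v = u'(t)` shows that the energy
`E(t) = ‖u'(t)‖² + Re a₀(t, u(t), u(t))` has derivative
`-2 Re a₁(t, u, u') + Re a₀'(t, u, u) + 2 Re ⟨f, u'⟩` on `[0, T]`: by Hermitian symmetry the
two terms `a₀(t, u', u)` and `a₀(t, u, u')` of the product rule have the same real part, and
they cancel against the equation. The identity is then the fundamental theorem of calculus
for `E`. Since the forms are only pointwise continuous (differentiable) in `t`, the product
rule for `t ↦ b(t, p t, q t)` comes from splitting the increment into one increment per slot;
the bound `‖b s x y‖ ≤ K ‖x‖ ‖y‖`, uniform in `s`, controls the slots that move with `s`.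
-/

open MeasureTheory intervalIntegral

open Filter Set Topology
open scoped InnerProductSpace

section BiadditiveFamily

variable {E F G : Type*}

theorem tendsto_biadditive_of_bound {α : Type*}
    [SeminormedAddCommGroup E] [SeminormedAddCommGroup F] [SeminormedAddCommGroup G]
    {l : Filter α} {b : α → E → F → G} {K : ℝ}
    (hadd₁ : ∀ᶠ s in l, ∀ x x' y, b s (x + x') y = b s x y + b s x' y)
    (hadd₂ : ∀ᶠ s in l, ∀ x y y', b s x (y + y') = b s x y + b s x y')
    (hbd : ∀ᶠ s in l, ∀ x y, ‖b s x y‖ ≤ K * ‖x‖ * ‖y‖)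
    {p : α → E} {q : α → F} {x : E} {y : F} {c : G}
    (hp : Tendsto p l (𝓝 x)) (hq : Tendsto q l (𝓝 y))
    (hc : Tendsto (fun s => b s x y) l (𝓝 c)) :
    Tendsto (fun s => b s (p s) (q s)) l (𝓝 c) := by
  have hp₀ : Tendsto (fun s => b s (p s - x) (q s)) l (𝓝 0) := by
    refine squeeze_zero_norm' (hbd.mono fun s hs => hs _ _) ?_
    simpa using (tendsto_const_nhds.mul (hp.sub_const x).norm).mul hq.norm
  have hq₀ : Tendsto (fun s => b s x (q s - y)) l (𝓝 0) := by
    refine squeeze_zero_norm' (hbd.mono fun s hs => hs _ _) ?_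
    simpa using tendsto_const_nhds.mul (hq.sub_const y).norm
  have hsplit : (fun s => b s (p s - x) (q s) + b s x (q s - y) + b s x y)
      =ᶠ[l] fun s => b s (p s) (q s) := by
    filter_upwards [hadd₁, hadd₂] with s h₁ h₂
    rw [add_assoc, ← h₂, sub_add_cancel, ← h₁, sub_add_cancel]
  simpa using ((hp₀.add hq₀).add hc).congr' hsplit

theorem ContinuousOn.biadditive_of_bound {α : Type*} [TopologicalSpace α]
    [SeminormedAddCommGroup E] [SeminormedAddCommGroup F] [SeminormedAddCommGroup G]
    {S : Set α} {b : α → E → F → G} {K : ℝ}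
    (hadd₁ : ∀ s ∈ S, ∀ x x' y, b s (x + x') y = b s x y + b s x' y)
    (hadd₂ : ∀ s ∈ S, ∀ x y y', b s x (y + y') = b s x y + b s x y')
    (hbd : ∀ s ∈ S, ∀ x y, ‖b s x y‖ ≤ K * ‖x‖ * ‖y‖)
    (hb : ∀ x y, ContinuousOn (fun s => b s x y) S)
    {p : α → E} {q : α → F} (hp : ContinuousOn p S) (hq : ContinuousOn q S) :
    ContinuousOn (fun s => b s (p s) (q s)) S := fun s hs =>
  tendsto_biadditive_of_bound (eventually_nhdsWithin_of_forall hadd₁)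
    (eventually_nhdsWithin_of_forall hadd₂) (eventually_nhdsWithin_of_forall hbd)
    (hp s hs) (hq s hs) (hb _ _ s hs)

theorem HasDerivWithinAt.biadditive_of_bound
    [NormedAddCommGroup E] [NormedSpace ℝ E] [NormedAddCommGroup F] [NormedSpace ℝ F]
    [NormedAddCommGroup G] [NormedSpace ℝ G]
    {S : Set ℝ} {t : ℝ} {b : ℝ → E → F → G} {b' : E → F → G} {K : ℝ}
    (hadd₁ : ∀ s ∈ S, ∀ x x' y, b s (x + x') y = b s x y + b s x' y)
    (hadd₂ : ∀ s ∈ S, ∀ x y y', b s x (y + y') = b s x y + b s x y')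
    (hsmul₁ : ∀ s ∈ S, ∀ (r : ℝ) x y, b s (r • x) y = r • b s x y)
    (hsmul₂ : ∀ s ∈ S, ∀ (r : ℝ) x y, b s x (r • y) = r • b s x y)
    (hbd : ∀ s ∈ S, ∀ x y, ‖b s x y‖ ≤ K * ‖x‖ * ‖y‖)
    (hb : ∀ x y, HasDerivWithinAt (fun s => b s x y) (b' x y) S t)
    {p : ℝ → E} {q : ℝ → F} {p' : E} {q' : F}
    (hp : HasDerivWithinAt p p' S t) (hq : HasDerivWithinAt q q' S t) :
    HasDerivWithinAt (fun s => b s (p s) (q s)) (b' (p t) (q t) + b t p' (q t) + b t (p t) q')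
      S t := by
  have hS : ∀ᶠ s in 𝓝[S \ {t}] t, s ∈ S := eventually_nhdsWithin_of_forall fun s hs => hs.1
  have hle : 𝓝[S \ {t}] t ≤ 𝓝[S] t := nhdsWithin_mono t sdiff_subset
  have hp_slope : Tendsto (fun s => b s (slope p t s) (q s)) (𝓝[S \ {t}] t) (𝓝 (b t p' (q t))) :=
    tendsto_biadditive_of_bound (hS.mono hadd₁) (hS.mono hadd₂) (hS.mono hbd)
      (hasDerivWithinAt_iff_tendsto_slope.mp hp) (hq.continuousWithinAt.mono_left hle)
      ((hb _ _).continuousWithinAt.mono_left hle)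
  have hq_slope : Tendsto (fun s => b s (p t) (slope q t s)) (𝓝[S \ {t}] t) (𝓝 (b t (p t) q')) :=
    tendsto_biadditive_of_bound (hS.mono hadd₁) (hS.mono hadd₂) (hS.mono hbd)
      tendsto_const_nhds (hasDerivWithinAt_iff_tendsto_slope.mp hq)
      ((hb _ _).continuousWithinAt.mono_left hle)
  have hsplit : (fun s => slope (fun s => b s (p t) (q t)) t s + b s (slope p t s) (q s)
      + b s (p t) (slope q t s)) =ᶠ[𝓝[S \ {t}] t] slope (fun s => b s (p s) (q s)) t := by
    filter_upwards [hS] with s hs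
    have h₁ := hadd₁ s hs (p s - p t) (p t) (q s)
    have h₂ := hadd₂ s hs (p t) (q s - q t) (q t)
    rw [sub_add_cancel] at h₁ h₂
    simp only [slope_def_module, hsmul₁ s hs, hsmul₂ s hs, ← smul_add, h₁, h₂]
    congr 1
    abel
  rw [hasDerivWithinAt_iff_tendsto_slope]
  exact (((hasDerivWithinAt_iff_tendsto_slope.mp (hb _ _)).add hp_slope).add hq_slope).congr' hsplit

theorem add_left_of_hasDerivWithinAt [Add E] [NormedAddCommGroup G] [NormedSpace ℝ G]
    {S : Set ℝ} {t : ℝ} {b : ℝ → E → F → G} {b' : E → F → G}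
    (hS : UniqueDiffWithinAt ℝ S t) (ht : t ∈ S)
    (hadd : ∀ s ∈ S, ∀ x x' y, b s (x + x') y = b s x y + b s x' y)
    (hb : ∀ x y, HasDerivWithinAt (fun s => b s x y) (b' x y) S t) (x x' : E) (y : F) :
    b' (x + x') y = b' x y + b' x' y :=
  hS.eq_deriv _ (hb _ _) (((hb x y).add (hb x' y)).congr_of_mem (fun s hs => hadd s hs x x' y) ht)

theorem ContinuousOn.deriv_biadditive_of_bound [NormedAddCommGroup E] [NormedAddCommGroup F]
    [NormedAddCommGroup G] [NormedSpace ℝ G] {S : Set ℝ} {b b' : ℝ → E → F → G} {K : ℝ}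
    (hS : UniqueDiffOn ℝ S)
    (hadd₁ : ∀ s ∈ S, ∀ x x' y, b s (x + x') y = b s x y + b s x' y)
    (hadd₂ : ∀ s ∈ S, ∀ x y y', b s x (y + y') = b s x y + b s x y')
    (hderiv : ∀ x y, ∀ t ∈ S, HasDerivWithinAt (fun s => b s x y) (b' t x y) S t)
    (hcont : ∀ x y, ContinuousOn (fun t => b' t x y) S)
    (hbd : ∀ t ∈ S, ∀ x y, ‖b' t x y‖ ≤ K * ‖x‖ * ‖y‖)
    {p : ℝ → E} {q : ℝ → F} (hp : ContinuousOn p S) (hq : ContinuousOn q S) :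
    ContinuousOn (fun t => b' t (p t) (q t)) S := by
  refine ContinuousOn.biadditive_of_bound (fun t ht => ?_) (fun t ht x y y' => ?_) hbd hcont hp hq
  · exact add_left_of_hasDerivWithinAt (hS t ht) ht hadd₁ (fun x y => hderiv x y t ht)
  · exact add_left_of_hasDerivWithinAt (b := fun s y x => b s x y) (hS t ht) ht
      (fun s hs y y' x => hadd₂ s hs x y y') (fun y x => hderiv x y t ht) y y' x

end BiadditiveFamily

section SesquilinearForm

variable {V : Type*} {a : V → V → ℂ}

theorem add_right_of_hermitian [Add V] (hadd : ∀ x x' y, a (x + x') y = a x y + a x' y)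
    (herm : ∀ x y, a x y = starRingEnd ℂ (a y x)) (x y y' : V) :
    a x (y + y') = a x y + a x y' := by
  rw [herm, hadd, map_add, ← herm, ← herm]

theorem real_smul_left_of_smul_left [AddCommGroup V] [Module ℂ V]
    (hsmul : ∀ (c : ℂ) x y, a (c • x) y = c * a x y)
    (r : ℝ) (x y : V) : a (r • x) y = r • a x y := by
  rw [← Complex.coe_smul, hsmul, Complex.real_smul]

theorem real_smul_right_of_hermitian [AddCommGroup V] [Module ℂ V]
    (hsmul : ∀ (c : ℂ) x y, a (c • x) y = c * a x y)
    (herm : ∀ x y, a x y = starRingEnd ℂ (a y x)) (r : ℝ) (x y : V) :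
    a x (r • y) = r • a x y := by
  rw [herm, real_smul_left_of_smul_left hsmul, Complex.real_smul, map_mul, Complex.conj_ofReal,
    ← herm, Complex.real_smul]

end SesquilinearForm

theorem HasDerivWithinAt.complex_re {f : ℝ → ℂ} {f' : ℂ} {S : Set ℝ} {t : ℝ}
    (hf : HasDerivWithinAt f f' S t) : HasDerivWithinAt (fun s => (f s).re) f'.re S t :=
  Complex.reCLM.hasFDerivAt.comp_hasDerivWithinAt t hf

theorem HasDerivWithinAt.norm_sq_of_complex {H : Type*} [NormedAddCommGroup H]
    [InnerProductSpace ℂ H] {h : ℝ → H} {h' : H} {S : Set ℝ} {t : ℝ}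
    (hh : HasDerivWithinAt h h' S t) :
    HasDerivWithinAt (fun s => ‖h s‖ ^ 2) (2 * (⟪h t, h'⟫_ℂ).re) S t := by
  convert (hh.inner ℂ hh).complex_re using 1
  · funext s
    exact (inner_self_eq_norm_sq (𝕜 := ℂ) (h s)).symm
  · rw [Complex.add_re, ← inner_conj_symm (h t) h', Complex.conj_re, two_mul]

theorem integral_eq_sub_of_hasDerivWithinAt_Icc {G : Type*} [NormedAddCommGroup G]
    [NormedSpace ℝ G] [CompleteSpace G] {f g : ℝ → G} {a b t : ℝ}
    (hf : ∀ x ∈ Icc a b, HasDerivWithinAt f (g x) (Icc a b) x) (hg : ContinuousOn g (Icc a b))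
    (ht : t ∈ Icc a b) : ∫ x in a..t, g x = f t - f a := by
  have hsub : Icc a t ⊆ Icc a b := Icc_subset_Icc le_rfl ht.2
  refine integral_eq_sub_of_hasDerivAt_of_le ht.1
    (fun x hx => (hf x (hsub hx)).continuousWithinAt.mono hsub) (fun x hx => ?_)
    ((hg.mono hsub).intervalIntegrable_of_Icc ht.1)
  exact (hf x (hsub (Ioo_subset_Icc_self hx))).hasDerivAt (Icc_mem_nhds hx.1 (hx.2.trans_le ht.2))

section HermitianFamily

variable {V : Type*} [NormedAddCommGroup V] [NormedSpace ℂ V] {S : Set ℝ}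
  {a₀ a₀' : ℝ → V → V → ℂ} {C : ℝ}
  (hadd : ∀ s ∈ S, ∀ x x' y : V, a₀ s (x + x') y = a₀ s x y + a₀ s x' y)
  (herm : ∀ s ∈ S, ∀ x y : V, a₀ s x y = starRingEnd ℂ (a₀ s y x))
  (hsmul : ∀ s ∈ S, ∀ (c : ℂ) (x y : V), a₀ s (c • x) y = c * a₀ s x y)
  (hbd : ∀ s ∈ S, ∀ x y : V, ‖a₀ s x y‖ ≤ C * ‖x‖ * ‖y‖)
include hadd herm hsmul hbd

theorem HasDerivWithinAt.re_hermitian_apply_self {t : ℝ} (ht : t ∈ S)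
    (hderiv : ∀ x y : V, HasDerivWithinAt (fun s => a₀ s x y) (a₀' t x y) S t)
    {u : ℝ → V} {u' : V} (hu : HasDerivWithinAt u u' S t) :
    HasDerivWithinAt (fun s => (a₀ s (u s) (u s)).re)
      ((a₀' t (u t) (u t)).re + 2 * (a₀ t (u t) u').re) S t := by
  have h := (HasDerivWithinAt.biadditive_of_bound hadd
    (fun s hs => add_right_of_hermitian (hadd s hs) (herm s hs))
    (fun s hs => real_smul_left_of_smul_left (hsmul s hs))
    (fun s hs => real_smul_right_of_hermitian (hsmul s hs) (herm s hs)) hbd hderiv hu hu).complex_re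
  convert h using 1
  rw [herm t ht u', Complex.add_re, Complex.add_re, Complex.conj_re]
  ring

theorem hasDerivWithinAt_energy {t : ℝ} (ht : t ∈ S)
    (hderiv : ∀ x y : V, HasDerivWithinAt (fun s => a₀ s x y) (a₀' t x y) S t)
    {H : Type*} [NormedAddCommGroup H] [InnerProductSpace ℂ H] (ι : V →L[ℂ] H)
    {u w : ℝ → V} {z : V} {g : H} {c : ℂ}
    (hu : HasDerivWithinAt u (w t) S t) (hw : HasDerivWithinAt w z S t)
    (heq : ⟪ι (w t), ι z⟫_ℂ + a₀ t (u t) (w t) + c = ⟪ι (w t), g⟫_ℂ) :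
    HasDerivWithinAt (fun s => ‖ι (w s)‖ ^ 2 + (a₀ s (u s) (u s)).re)
      (-(2 * c.re) + (a₀' t (u t) (u t)).re + 2 * (⟪g, ι (w t)⟫_ℂ).re) S t := by
  have hιw : HasDerivWithinAt (fun s => ι (w s)) (ι z) S t :=
    (ι.restrictScalars ℝ).hasFDerivAt.comp_hasDerivWithinAt t hw
  refine (hιw.norm_sq_of_complex.add
    (hu.re_hermitian_apply_self hadd herm hsmul hbd ht hderiv)).congr_deriv ?_
  have hre := congrArg Complex.re heq
  rw [← inner_conj_symm g, Complex.conj_re]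
  simp only [Complex.add_re] at hre
  linarith

end HermitianFamily

theorem energy_identity_general {V H : Type*}
    [NormedAddCommGroup V] [InnerProductSpace ℂ V]
    [NormedAddCommGroup H] [InnerProductSpace ℂ H]
    (ι : V →L[ℂ] H)
    (T : ℝ) (hT : 0 < T)
    (a₀ a₀' a₁ : ℝ → V → V → ℂ) (C C₀ C₁ : ℝ)
    -- `a₀(t,·,·)` is a continuous sesquilinear Hermitian form
    (h0add : ∀ t ∈ Set.Icc (0:ℝ) T, ∀ u u' v : V, a₀ t (u + u') v = a₀ t u v + a₀ t u' v)
    (h0smul : ∀ t ∈ Set.Icc (0:ℝ) T, ∀ (z : ℂ) (u v : V), a₀ t (z • u) v = z * a₀ t u v)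
    (h0herm : ∀ t ∈ Set.Icc (0:ℝ) T, ∀ u v : V, a₀ t u v = (starRingEnd ℂ) (a₀ t v u))
    (h0bd : ∀ t ∈ Set.Icc (0:ℝ) T, ∀ u v : V, ‖a₀ t u v‖ ≤ C * ‖u‖ * ‖v‖)
    -- `t ↦ a₀(t,u,v)` is continuously differentiable on `[0,T]` with derivative `a₀'`
    (h0deriv : ∀ u v : V, ∀ t ∈ Set.Icc (0:ℝ) T,
      HasDerivWithinAt (fun s => a₀ s u v) (a₀' t u v) (Set.Icc 0 T) t)
    (h0contd : ∀ u v : V, ContinuousOn (fun t => a₀' t u v) (Set.Icc 0 T))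
    (h0bd' : ∀ t ∈ Set.Icc (0:ℝ) T, ∀ u v : V, ‖a₀' t u v‖ ≤ C₀ * ‖u‖ * ‖v‖)
    -- `a₁(t,·,·)` is a continuous sesquilinear form, continuous in `t`
    (h1add₁ : ∀ t ∈ Set.Icc (0:ℝ) T, ∀ u u' v : V, a₁ t (u + u') v = a₁ t u v + a₁ t u' v)
    (h1add₂ : ∀ t ∈ Set.Icc (0:ℝ) T, ∀ u v v' : V, a₁ t u (v + v') = a₁ t u v + a₁ t u v')
    (h1bd : ∀ t ∈ Set.Icc (0:ℝ) T, ∀ u v : V, ‖a₁ t u v‖ ≤ C₁ * ‖u‖ * ‖v‖)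
    (h1cont : ∀ u v : V, ContinuousOn (fun t => a₁ t u v) (Set.Icc 0 T))
    -- the solution `u ∈ C²([0,T],V)` with `u' = w`, `u'' = z`, and the data `f ∈ C([0,T],H)`
    (u w z : ℝ → V) (f : ℝ → H)
    (hu : ∀ t ∈ Set.Icc (0:ℝ) T, HasDerivWithinAt u (w t) (Set.Icc 0 T) t)
    (hw : ∀ t ∈ Set.Icc (0:ℝ) T, HasDerivWithinAt w (z t) (Set.Icc 0 T) t)
    (hf : ContinuousOn f (Set.Icc 0 T))
    -- the equation
    (heq : ∀ t ∈ Set.Icc (0:ℝ) T, ∀ v : V,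
      (inner ℂ (ι v) (ι (z t)) : ℂ) + a₀ t (u t) v + a₁ t (u t) v = (inner ℂ (ι v) (f t) : ℂ)) :
    ∀ t ∈ Set.Icc (0:ℝ) T,
      ‖ι (w t)‖ ^ 2 + (a₀ t (u t) (u t)).re
        = ‖ι (w 0)‖ ^ 2 + (a₀ 0 (u 0) (u 0)).re
          - 2 * (∫ τ in (0:ℝ)..t, (a₁ τ (u τ) (w τ)).re)
          + (∫ τ in (0:ℝ)..t, (a₀' τ (u τ) (u τ)).re)
          + 2 * (∫ τ in (0:ℝ)..t, ((inner ℂ (f τ) (ι (w τ)) : ℂ)).re) := by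
  intro t ht
  have hucont : ContinuousOn u (Icc 0 T) := fun s hs => (hu s hs).continuousWithinAt
  have hwcont : ContinuousOn w (Icc 0 T) := fun s hs => (hw s hs).continuousWithinAt
  have h0add₂ := fun s hs => add_right_of_hermitian (h0add s hs) (h0herm s hs)
  have ha₁ : ContinuousOn (fun τ => (a₁ τ (u τ) (w τ)).re) (Icc 0 T) :=
    Complex.continuous_re.comp_continuousOn
      (.biadditive_of_bound h1add₁ h1add₂ h1bd h1cont hucont hwcont)
  have ha₀' : ContinuousOn (fun τ => (a₀' τ (u τ) (u τ)).re) (Icc 0 T) :=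
    Complex.continuous_re.comp_continuousOn (.deriv_biadditive_of_bound (uniqueDiffOn_Icc hT)
      h0add h0add₂ h0deriv h0contd h0bd' hucont hucont)
  have hfw : ContinuousOn (fun τ => (⟪f τ, ι (w τ)⟫_ℂ).re) (Icc 0 T) :=
    Complex.continuous_re.comp_continuousOn (hf.inner (ι.continuous.comp_continuousOn hwcont))
  have henergy := fun s hs => hasDerivWithinAt_energy h0add h0herm h0smul h0bd hs
    (fun x y => h0deriv x y s hs) ι (hu s hs) (hw s hs) (heq s hs (w s))
  have hFTC := integral_eq_sub_of_hasDerivWithinAt_Icc henergy (by fun_prop) ht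
  have hint {φ : ℝ → ℝ} (hφ : ContinuousOn φ (Icc 0 T)) : IntervalIntegrable φ volume 0 t :=
    (hφ.mono (Icc_subset_Icc le_rfl ht.2)).intervalIntegrable_of_Icc ht.1
  rw [intervalIntegral.integral_add, intervalIntegral.integral_add, intervalIntegral.integral_neg,
    intervalIntegral.integral_const_mul, intervalIntegral.integral_const_mul] at hFTC
  · linarith
  all_goals exact hint (by fun_prop)

theorem energy_identity {V H : Type*}
    [NormedAddCommGroup V] [InnerProductSpace ℂ V] [CompleteSpace V]
    [NormedAddCommGroup H] [InnerProductSpace ℂ H] [CompleteSpace H]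
    (ι : V →L[ℂ] H) (hι : Function.Injective ι)
    (T : ℝ) (hT : 0 < T)
    (a₀ a₀' a₁ : ℝ → V → V → ℂ) (C C₀ C₁ : ℝ)
    -- `a₀(t,·,·)` is a continuous sesquilinear Hermitian form
    (h0add : ∀ t ∈ Set.Icc (0:ℝ) T, ∀ u u' v : V, a₀ t (u + u') v = a₀ t u v + a₀ t u' v)
    (h0smul : ∀ t ∈ Set.Icc (0:ℝ) T, ∀ (z : ℂ) (u v : V), a₀ t (z • u) v = z * a₀ t u v)
    (h0herm : ∀ t ∈ Set.Icc (0:ℝ) T, ∀ u v : V, a₀ t u v = (starRingEnd ℂ) (a₀ t v u))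
    (h0bd : ∀ t ∈ Set.Icc (0:ℝ) T, ∀ u v : V, ‖a₀ t u v‖ ≤ C * ‖u‖ * ‖v‖)
    -- `t ↦ a₀(t,u,v)` is continuously differentiable on `[0,T]` with derivative `a₀'`
    (h0deriv : ∀ u v : V, ∀ t ∈ Set.Icc (0:ℝ) T,
      HasDerivWithinAt (fun s => a₀ s u v) (a₀' t u v) (Set.Icc 0 T) t)
    (h0contd : ∀ u v : V, ContinuousOn (fun t => a₀' t u v) (Set.Icc 0 T))
    (h0bd' : ∀ t ∈ Set.Icc (0:ℝ) T, ∀ u v : V, ‖a₀' t u v‖ ≤ C₀ * ‖u‖ * ‖v‖)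
    -- `a₁(t,·,·)` is a continuous sesquilinear form, continuous in `t`
    (h1add₁ : ∀ t ∈ Set.Icc (0:ℝ) T, ∀ u u' v : V, a₁ t (u + u') v = a₁ t u v + a₁ t u' v)
    (h1smul₁ : ∀ t ∈ Set.Icc (0:ℝ) T, ∀ (z : ℂ) (u v : V), a₁ t (z • u) v = z * a₁ t u v)
    (h1add₂ : ∀ t ∈ Set.Icc (0:ℝ) T, ∀ u v v' : V, a₁ t u (v + v') = a₁ t u v + a₁ t u v')
    (h1smul₂ : ∀ t ∈ Set.Icc (0:ℝ) T, ∀ (z : ℂ) (u v : V),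
      a₁ t u (z • v) = (starRingEnd ℂ) z * a₁ t u v)
    (h1bd : ∀ t ∈ Set.Icc (0:ℝ) T, ∀ u v : V, ‖a₁ t u v‖ ≤ C₁ * ‖u‖ * ‖v‖)
    (h1cont : ∀ u v : V, ContinuousOn (fun t => a₁ t u v) (Set.Icc 0 T))
    -- the solution `u ∈ C²([0,T],V)` with `u' = w`, `u'' = z`, and the data `f ∈ C([0,T],H)`
    (u w z : ℝ → V) (f : ℝ → H)
    (hu : ∀ t ∈ Set.Icc (0:ℝ) T, HasDerivWithinAt u (w t) (Set.Icc 0 T) t)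
    (hw : ∀ t ∈ Set.Icc (0:ℝ) T, HasDerivWithinAt w (z t) (Set.Icc 0 T) t)
    (hz : ContinuousOn z (Set.Icc 0 T))
    (hf : ContinuousOn f (Set.Icc 0 T))
    -- the equation
    (heq : ∀ t ∈ Set.Icc (0:ℝ) T, ∀ v : V,
      (inner ℂ (ι v) (ι (z t)) : ℂ) + a₀ t (u t) v + a₁ t (u t) v = (inner ℂ (ι v) (f t) : ℂ)) :
    ∀ t ∈ Set.Icc (0:ℝ) T,
      ‖ι (w t)‖ ^ 2 + (a₀ t (u t) (u t)).re
        = ‖ι (w 0)‖ ^ 2 + (a₀ 0 (u 0) (u 0)).re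
          - 2 * (∫ τ in (0:ℝ)..t, (a₁ τ (u τ) (w τ)).re)
          + (∫ τ in (0:ℝ)..t, (a₀' τ (u τ) (u τ)).re)
          + 2 * (∫ τ in (0:ℝ)..t, ((inner ℂ (f τ) (ι (w τ)) : ℂ)).re) :=
  energy_identity_general ι T hT a₀ a₀' a₁ C C₀ C₁ h0add h0smul h0herm h0bd h0deriv h0contd h0bd'
    h1add₁ h1add₂ h1bd h1cont u w z f hu hw hf heq
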